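/- Let 𝔤 be a finite-dimensional real metabelian Lie algebra with trivial centre. Then 𝔤^∞ := ⋂_{j≥1} 𝔤^j equals the derived algebra [𝔤, 𝔤], and for every Cartan subalgebra 𝔥 ⊆ 𝔤, the subalgebra 𝔥 is abelian and 𝔤 = 𝔤^∞ ∔ 𝔥 (i.e. 𝔤^∞ ∩ 𝔥 = {0} and 𝔤^∞ + 𝔥 = 𝔤 as vector spaces). -/

import Mathlib

/-!
Let `𝔥` be a Cartan subalgebra, `𝔤 = 𝔥 ⊕ 𝔤₁` the Fitting decomposition of `𝔤` under `𝔥`, and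
`𝔞 = [𝔤, 𝔤]`. The Fitting component `𝔤₁` lies in every term of the lower central series, so
`𝔤₁ ⊆ 𝔤^∞ ⊆ 𝔞`. As `𝔞` is abelian, `𝔤₁` commutes with `𝔥 ∩ 𝔞`; if `𝔥 ∩ 𝔞 ≠ 0`, the nilpotent
algebra `𝔥` kills some nonzero element of it, which is then central. Hence `𝔥 ∩ 𝔞 = 0`, the modular
law gives `𝔞 = 𝔤₁`, so `𝔤^∞ = 𝔞`, and `[𝔥, 𝔥] ⊆ 𝔥 ∩ 𝔞 = 0`.
-/

open LieModule LieAlgebra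

namespace LieModule

variable {R L M : Type*} [CommRing R] [LieRing L] [LieAlgebra R L] [AddCommGroup M] [Module R M]
  [LieRingModule L M]

lemma lowerCentralSeries_le_restr (H : LieSubalgebra R L) (k : ℕ) :
    lowerCentralSeries R H M k ≤ (lowerCentralSeries R L M k).restr H := by
  induction k with
  | zero => exact fun m _ ↦ LieSubmodule.mem_top m
  | succ k ih =>
    rw [lowerCentralSeries_succ, LieSubmodule.lie_le_iff]
    intro x _ m hm
    rw [LieSubmodule.mem_restr, LieSubalgebra.coe_bracket_of_module, lowerCentralSeries_succ]
    exact LieSubmodule.lie_mem_lie (LieSubmodule.mem_top (x : L)) (ih hm)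

lemma exists_ne_zero_mem_maxTrivSubmodule [LieModule R L M] (N : LieSubmodule R L M)
    [IsNilpotent L N] (hN : N ≠ ⊥) : ∃ m ∈ N, m ≠ 0 ∧ m ∈ maxTrivSubmodule R L M := by
  have : Nontrivial N := (LieSubmodule.nontrivial_iff_ne_bot R L M).mpr hN
  have := nontrivial_max_triv_of_isNilpotent R L N
  obtain ⟨⟨m, hm⟩, hm0⟩ := exists_ne (0 : maxTrivSubmodule R L N)
  refine ⟨m, m.2, fun h ↦ hm0 (Subtype.ext (Subtype.ext h)), fun x ↦ ?_⟩
  simpa using congrArg Subtype.val (hm x)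

lemma posFittingComp_le_restr_lowerCentralSeries (H : LieSubalgebra R L) [LieRing.IsNilpotent H]
    (k : ℕ) : posFittingComp R H L ≤ (lowerCentralSeries R L L k).restr H :=
  ((posFittingComp_le_iInf_lowerCentralSeries R H L).trans (iInf_le _ k)).trans
    (lowerCentralSeries_le_restr H k)

end LieModule

namespace LieAlgebra

variable {K L : Type*} [Field K] [LieRing L] [LieAlgebra K L] [FiniteDimensional K L]
  (H : LieSubalgebra K L) [H.IsCartanSubalgebra]

lemma isCompl_toLieSubmodule_posFittingComp :
    IsCompl H.toLieSubmodule (posFittingComp K H L) :=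
  rootSpace_zero_eq K L H ▸ isCompl_genWeightSpace_zero_posFittingComp K H L

lemma mem_center_of_mem_derivedSeries_of_forall_lie_eq_zero
    (hmeta : ∀ x ∈ derivedSeries K L 1, ∀ y ∈ derivedSeries K L 1, ⁅x, y⁆ = 0)
    {z : L} (hz : z ∈ derivedSeries K L 1) (hzH : ∀ h ∈ H, ⁅h, z⁆ = 0) : z ∈ center K L := by
  intro x
  obtain ⟨h, hh, f, hf, rfl⟩ := (LieSubmodule.mem_sup _ _ x).mp
    ((isCompl_toLieSubmodule_posFittingComp H).sup_eq_top ▸ LieSubmodule.mem_top x)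
  have hfz : ⁅f, z⁆ = 0 := hmeta f (posFittingComp_le_restr_lowerCentralSeries H 1 hf) z hz
  rw [add_lie, hzH h hh, hfz, add_zero]

lemma disjoint_toLieSubmodule_restr_derivedSeries (hcenter : center K L = ⊥)
    (hmeta : ∀ x ∈ derivedSeries K L 1, ∀ y ∈ derivedSeries K L 1, ⁅x, y⁆ = 0) :
    Disjoint H.toLieSubmodule ((derivedSeries K L 1).restr H) := by
  set N := H.toLieSubmodule ⊓ (derivedSeries K L 1).restr H
  have : IsNilpotent H N :=
    isNilpotent_of_le K H L N _ (inf_le_left.trans (rootSpace_zero_eq K L H).ge)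
  rw [disjoint_iff]
  by_contra hN
  obtain ⟨z, hzN, hz0, hz⟩ := exists_ne_zero_mem_maxTrivSubmodule N hN
  have hzc : z ∈ center K L :=
    mem_center_of_mem_derivedSeries_of_forall_lie_eq_zero H hmeta hzN.2 fun h hh ↦ hz ⟨h, hh⟩
  exact hz0 ((LieSubmodule.mem_bot z).mp (hcenter ▸ hzc))

lemma posFittingComp_eq_restr_derivedSeries (hcenter : center K L = ⊥)
    (hmeta : ∀ x ∈ derivedSeries K L 1, ∀ y ∈ derivedSeries K L 1, ⁅x, y⁆ = 0) :
    posFittingComp K H L = (derivedSeries K L 1).restr H := by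
  refine eq_of_le_of_inf_le_of_sup_le (z := H.toLieSubmodule)
    (posFittingComp_le_restr_lowerCentralSeries H 1) ?_ ?_
  · rw [(disjoint_toLieSubmodule_restr_derivedSeries H hcenter hmeta).symm.eq_bot]
    exact bot_le
  · rw [(isCompl_toLieSubmodule_posFittingComp H).symm.sup_eq_top]
    exact le_top

lemma isCompl_toLieSubmodule_restr_derivedSeries (hcenter : center K L = ⊥)
    (hmeta : ∀ x ∈ derivedSeries K L 1, ∀ y ∈ derivedSeries K L 1, ⁅x, y⁆ = 0) :
    IsCompl H.toLieSubmodule ((derivedSeries K L 1).restr H) :=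
  posFittingComp_eq_restr_derivedSeries H hcenter hmeta ▸ isCompl_toLieSubmodule_posFittingComp H

lemma iInf_lowerCentralSeries_eq_derivedSeries [Infinite K] (hcenter : center K L = ⊥)
    (hmeta : ∀ x ∈ derivedSeries K L 1, ∀ y ∈ derivedSeries K L 1, ⁅x, y⁆ = 0) :
    ⨅ k, lowerCentralSeries K L L k = derivedSeries K L 1 := by
  obtain ⟨x, hx⟩ := exists_isCartanSubalgebra_engel (K := K) (L := L)
  refine le_antisymm (iInf_le _ 1) (le_iInf fun k z hz ↦ ?_)
  rw [← LieSubmodule.mem_restr (H := LieSubalgebra.engel K x),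
    ← posFittingComp_eq_restr_derivedSeries _ hcenter hmeta] at hz
  exact posFittingComp_le_restr_lowerCentralSeries _ k hz

end LieAlgebra

/-- Let `𝔤` be a finite-dimensional real metabelian Lie algebra with trivial centre.
Then `𝔤^∞ := ⋂_{j≥1} 𝔤^j` equals the derived algebra `[𝔤, 𝔤]`, and every Cartan
subalgebra `𝔥` of `𝔤` is abelian and satisfies `𝔤 = 𝔤^∞ ∔ 𝔥`. -/
theorem stmt8 (L : Type*) [LieRing L] [LieAlgebra ℝ L] [Module.Finite ℝ L]
    (hcenter : LieAlgebra.center ℝ L = ⊥)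
    (hmeta : ∀ x ∈ LieAlgebra.derivedSeries ℝ L 1,
      ∀ y ∈ LieAlgebra.derivedSeries ℝ L 1, ⁅x, y⁆ = 0) :
    (⨅ k, LieModule.lowerCentralSeries ℝ L L k) = LieAlgebra.derivedSeries ℝ L 1 ∧
      ∀ H : LieSubalgebra ℝ L, H.IsCartanSubalgebra →
        (∀ x ∈ H, ∀ y ∈ H, ⁅x, y⁆ = 0) ∧
        (∀ x, x ∈ (⨅ k, LieModule.lowerCentralSeries ℝ L L k) → x ∈ H → x = 0) ∧
        (∀ x : L, ∃ y ∈ (⨅ k, LieModule.lowerCentralSeries ℝ L L k), ∃ z ∈ H, x = y + z) := by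
  have hinf := iInf_lowerCentralSeries_eq_derivedSeries hcenter hmeta
  refine ⟨hinf, fun H _ ↦ ?_⟩
  rw [hinf]
  have hcompl := isCompl_toLieSubmodule_restr_derivedSeries H hcenter hmeta
  have hdisj : ∀ x ∈ H, x ∈ derivedSeries ℝ L 1 → x = 0 := fun x hxH hxA ↦
    Submodule.disjoint_def.mp (LieSubmodule.disjoint_toSubmodule.mpr hcompl.disjoint) x hxH hxA
  refine ⟨fun x hx y hy ↦ hdisj _ (H.lie_mem hx hy) ?_, fun x hxA hxH ↦ hdisj x hxH hxA,
    fun x ↦ ?_⟩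
  · exact LieSubmodule.lie_mem_lie (LieSubmodule.mem_top x) (LieSubmodule.mem_top y)
  · obtain ⟨z, hz, y, hy, rfl⟩ :=
      (LieSubmodule.mem_sup _ _ x).mp (hcompl.sup_eq_top ▸ LieSubmodule.mem_top x)
    exact ⟨y, hy, z, hz, add_comm z y⟩
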